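/- arXiv:1912.03772 — 2 statements merged into one kernel-verified Lean document; each statement's English description precedes it below -/
import Mathlib

section
/- Let N be a sufficiently large positive integer, X the unique real solution of X log X = N, τ = X^{−23/25}, and S(α) = Σ_{p ≤ X} e(α[p log p]) log p, the sum running over primes p ≤ X. Then ∫_{−τ}^{τ} |S(α)|² dα ≪ X log X. -/
/-- `e(t) = e^{2πit}`. -/
noncomputable def ee (t : ℝ) : ℂ := Complex.exp (2 * Real.pi * Complex.I * t)

/-- `S(α) = Σ_{p ≤ X} e(α⌊p log p⌋) log p`, the sum running over primes `p ≤ X`. -/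
noncomputable def S (X : ℝ) (α : ℝ) : ℂ :=
  ∑ p ∈ (Finset.range (⌊X⌋₊ + 1)).filter Nat.Prime,
    (Real.log p : ℂ) * ee (α * (⌊(p : ℝ) * Real.log p⌋ : ℝ))

/-!
Since `τ ≤ 1`, the integral is at most the integral over `[-1, 1]`, two full periods of `S`.
The frequencies `⌊p log p⌋` are distinct, because `x log x - x` is increasing on `[1, ∞)`, so by
orthogonality that integral equals `2 ∑_{p ≤ X} log² p ≤ 2 log X · θ(X) ≤ 2 log 4 · X log X`.
-/

open Finset MeasureTheory Real

lemma ee_add (x y : ℝ) : ee (x + y) = ee x * ee y := by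
  rw [ee, ee, ee, ← Complex.exp_add]
  push_cast
  ring_nf

lemma star_ee (x : ℝ) : starRingEnd ℂ (ee x) = ee (-x) := by
  rw [ee, ee, ← Complex.exp_conj]
  simp [map_ofNat]

@[fun_prop]
lemma continuous_ee : Continuous ee := by
  unfold ee
  fun_prop

lemma integral_ee_mul_int (a : ℝ) (k m : ℤ) :
    ∫ α in a..a + k, ee (α * m) = if m = 0 then (k : ℂ) else 0 := by
  split_ifs with hm
  · simp [hm, ee]
  have hc : 2 * π * Complex.I * m ≠ 0 := by simp [hm, pi_ne_zero]
  have hperiod : Complex.exp (2 * π * Complex.I * m * ↑(a + k)) =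
      Complex.exp (2 * π * Complex.I * m * a) := by
    rw [← (Complex.exp_periodic.int_mul (m * k)) (2 * π * Complex.I * m * a)]
    push_cast
    ring_nf
  simp_rw [ee, show ∀ α : ℝ, 2 * π * Complex.I * ↑(α * m) = 2 * π * Complex.I * m * α by
    intro α; push_cast; ring]
  rw [integral_exp_mul_complex hc, hperiod, sub_self, zero_div]

theorem integral_norm_sq_sum_ee {ι : Type*} (s : Finset ι) (c : ι → ℂ) {n : ι → ℤ}
    (hn : Set.InjOn n s) (a : ℝ) (k : ℤ) :
    ∫ α in a..a + k, ‖∑ i ∈ s, c i * ee (α * n i)‖ ^ 2 = k * ∑ i ∈ s, ‖c i‖ ^ 2 := by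
  have hnorm_sq : ∀ z : ℂ, ((‖z‖ ^ 2 : ℝ) : ℂ) = z * starRingEnd ℂ z := fun z => by
    rw [Complex.mul_conj, Complex.sq_norm]
  have hexpand : ∀ α : ℝ,
      ((‖∑ i ∈ s, c i * ee (α * n i)‖ ^ 2 : ℝ) : ℂ) =
        ∑ i ∈ s, ∑ j ∈ s, c i * starRingEnd ℂ (c j) * ee (α * ((n i - n j : ℤ) : ℝ)) := by
    intro α
    rw [hnorm_sq, map_sum, sum_mul_sum]
    refine sum_congr rfl fun i _ => sum_congr rfl fun j _ => ?_
    rw [map_mul, star_ee, Int.cast_sub, mul_sub, sub_eq_add_neg, ee_add]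
    ring
  have hintegrable : ∀ (b : ℂ) (m : ℤ),
      IntervalIntegrable (fun α : ℝ => b * ee (α * m)) volume a (a + k) :=
    fun b m => (by fun_prop : Continuous _).intervalIntegrable _ _
  apply Complex.ofReal_injective
  rw [← intervalIntegral.integral_ofReal]
  simp_rw [hexpand]
  rw [intervalIntegral.integral_finsetSum fun i _ =>
    (by fun_prop : Continuous _).intervalIntegrable _ _]
  rw [Complex.ofReal_mul, Complex.ofReal_intCast, Complex.ofReal_sum, mul_sum]
  refine sum_congr rfl fun i hi => ?_
  rw [intervalIntegral.integral_finsetSum fun j _ => hintegrable _ _]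
  simp_rw [intervalIntegral.integral_const_mul, integral_ee_mul_int, sub_eq_zero]
  rw [sum_eq_single_of_mem i hi fun j hj hji => by simp [hn.ne hi hj hji.symm]]
  rw [if_pos rfl, hnorm_sq]
  ring

lemma monotoneOn_mul_log_sub_self : MonotoneOn (fun x : ℝ => x * log x - x) (Set.Ici 1) := by
  intro x (hx : 1 ≤ x) y (hy : 1 ≤ y) hxy
  have hlog_div : log x - log y ≤ x / y - 1 := by
    rw [← log_div (by positivity) (by positivity)]
    exact log_le_sub_one_of_pos (by positivity)
  have hy_log : y - x ≤ y * (log y - log x) := by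
    have := mul_le_mul_of_nonneg_left hlog_div (by linarith : 0 ≤ y)
    rw [show y * (x / y - 1) = x - y by field_simp] at this
    linarith
  have hx_log : 0 ≤ (y - x) * log x := mul_nonneg (by linarith) (log_nonneg hx)
  dsimp only
  linarith

lemma strictMonoOn_floor_mul_log :
    StrictMonoOn (fun n : ℕ => ⌊(n : ℝ) * log n⌋) {n | 1 ≤ n} := by
  intro p hp q hq hpq
  have hp1 : (1 : ℝ) ≤ p := by exact_mod_cast hp
  have hpq' : (p : ℝ) + 1 ≤ q := by exact_mod_cast hpq
  have hmono := monotoneOn_mul_log_sub_self hp1 (hp1.trans (by linarith)) (by linarith)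
  dsimp only at hmono ⊢
  rw [← Int.add_one_le_iff, ← Int.floor_add_one]
  exact Int.floor_mono (by linarith)

@[fun_prop]
lemma continuous_S (X : ℝ) : Continuous (S X) := by
  unfold S
  fun_prop

lemma integral_norm_S_sq (X : ℝ) :
    ∫ α in (-1 : ℝ)..1, ‖S X α‖ ^ 2 = 2 * ∑ p ∈ Nat.primesLE ⌊X⌋₊, log p ^ 2 := by
  have hinj : Set.InjOn (fun p : ℕ => ⌊(p : ℝ) * log p⌋) (Nat.primesLE ⌊X⌋₊) :=
    strictMonoOn_floor_mul_log.injOn.mono fun p hp =>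
      (Nat.prime_of_mem_primesLE hp).one_le
  have := integral_norm_sq_sum_ee _ (fun p : ℕ => ((log p : ℝ) : ℂ)) hinj (-1) 2
  rw [show (-1 : ℝ) + ((2 : ℤ) : ℝ) = 1 by norm_num] at this
  simp only [Complex.norm_real, norm_eq_abs, sq_abs, Int.cast_ofNat] at this
  exact this

lemma sum_primesLE_log_sq_le_log_mul_theta (x : ℝ) :
    ∑ p ∈ Nat.primesLE ⌊x⌋₊, log p ^ 2 ≤ log x * Chebyshev.theta x := by
  rw [Chebyshev.theta_eq_sum_primesLE, mul_sum]
  refine sum_le_sum fun p hp => ?_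
  have hp2 : (2 : ℝ) ≤ p := by exact_mod_cast (Nat.prime_of_mem_primesLE hp).two_le
  have hpx : (p : ℝ) ≤ x := (Nat.le_floor_iff' (Nat.prime_of_mem_primesLE hp).ne_zero).mp
    (Nat.mem_primesLE.mp hp).1
  rw [sq]
  exact mul_le_mul_of_nonneg_right (log_le_log (by linarith) hpx) (log_nonneg (by linarith))

theorem int_S_sq_minor :
    ∃ C : ℝ, 0 < C ∧ ∃ N₀ : ℕ, ∀ N : ℕ, N₀ ≤ N →
      ∀ X : ℝ, 1 < X → X * Real.log X = N →
        (∫ α in (-(X ^ ((-23 : ℝ)/25)))..(X ^ ((-23 : ℝ)/25)), ‖S X α‖ ^ 2) ≤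
          C * (X * Real.log X) := by
  refine ⟨2 * log 4, by positivity, 0, fun N _ X hX _ => ?_⟩
  have hτ : X ^ ((-23 : ℝ) / 25) ≤ 1 := rpow_le_one_of_one_le_of_nonpos hX.le (by norm_num)
  have hτ_pos : 0 < X ^ ((-23 : ℝ) / 25) := by positivity
  calc (∫ α in (-(X ^ ((-23 : ℝ)/25)))..(X ^ ((-23 : ℝ)/25)), ‖S X α‖ ^ 2)
      ≤ ∫ α in (-1 : ℝ)..1, ‖S X α‖ ^ 2 :=
        intervalIntegral.integral_mono_interval (by linarith) (by linarith) hτ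
          (ae_of_all _ fun _ => by positivity)
          ((by fun_prop : Continuous fun α => ‖S X α‖ ^ 2).intervalIntegrable _ _)
    _ = 2 * ∑ p ∈ Nat.primesLE ⌊X⌋₊, log p ^ 2 := integral_norm_S_sq X
    _ ≤ 2 * (log X * (log 4 * X)) := by
        gcongr
        exact (sum_primesLE_log_sq_le_log_mul_theta X).trans <| mul_le_mul_of_nonneg_left
          (Chebyshev.theta_le_log4_mul_x (by linarith)) (log_nonneg hX.le)
    _ = 2 * log 4 * (X * log X) := by ring
end

section
/- Let N be a sufficiently large positive integer, X the unique real solution of X log X = N, τ = X^{−23/25}, y(t) the implicit function defined by y log y = t, Θ(α) = Σ_{m ≤ N} e(mα)/(1 + log y(m)), Ψ₃ = ∫_{−1/2}^{1/2} Θ³(α) e(−Nα) dα, and Ψ̃ = ∫_{−τ}^{τ} Θ³(α) e(−Nα) dα. Then |Ψ₃ − Ψ̃| ≪ X^{46/25}. -/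
/-- `Θ(α) = Σ_{m ≤ N} e(mα)/(1 + log y(m))`, the sum over positive integers `m ≤ N`;
here `y` is the implicit function defined by `y log y = t`. -/
noncomputable def Th (y : ℝ → ℝ) (N : ℕ) (α : ℝ) : ℂ :=
  ∑ m ∈ Finset.Icc 1 N, ee (m * α) / (1 + (Real.log (y m) : ℂ))

/-!
Write `Θ(α) = ∑ cₘ e(α)ᵐ` with `cₘ = 1/(1 + log y(m))`. Since `y` is increasing, the `cₘ` decrease
from `c₁ ≤ 1`, so Abel summation against the geometric partial sums, which are at most
`2/|e(α) - 1| ≤ 1/(2|α|)`, gives `|Θ(α)| ≤ 1/(2|α|)` on `0 < |α| ≤ 1/2`. Hence the integrand is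
`O(|α|⁻³)` off `[-τ, τ]`, and the two tails contribute `O(τ⁻²) = O(X^{46/25})`.
-/

open Finset Real

section AbelSummation

variable {E : Type*} [NormedAddCommGroup E] [NormedSpace ℝ E]

theorem Finset.sum_range_smul_eq_smul_sum_add_sum_sub_smul {R M : Type*} [Ring R]
    [AddCommGroup M] [Module R M] (f : ℕ → R) (z : ℕ → M) (n : ℕ) :
    ∑ i ∈ range n, f i • z i =
      f n • ∑ i ∈ range n, z i + ∑ i ∈ range n, (f i - f (i + 1)) • ∑ j ∈ range (i + 1), z j := by
  induction n with
  | zero => simp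
  | succ n ih => simp only [sum_range_succ, ih, sub_smul, smul_add]; abel

theorem norm_sum_range_smul_le_of_antitone {f : ℕ → ℝ} (hf : Antitone f) (hf0 : ∀ i, 0 ≤ f i)
    {z : ℕ → E} {b : ℝ} (hz : ∀ k, ‖∑ i ∈ range k, z i‖ ≤ b) (n : ℕ) :
    ‖∑ i ∈ range n, f i • z i‖ ≤ f 0 * b := by
  rw [sum_range_smul_eq_smul_sum_add_sum_sub_smul]
  have hstep : ∀ i, 0 ≤ f i - f (i + 1) := fun i => sub_nonneg.2 (hf i.le_succ)
  calc _ ≤ f n * b + ∑ i ∈ range n, (f i - f (i + 1)) * b := by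
        refine (norm_add_le _ _).trans (add_le_add ?_ ((norm_sum_le _ _).trans ?_))
        · rw [norm_smul, norm_of_nonneg (hf0 n)]
          exact mul_le_mul_of_nonneg_left (hz n) (hf0 n)
        · refine sum_le_sum fun i _ => ?_
          rw [norm_smul, norm_of_nonneg (hstep i)]
          exact mul_le_mul_of_nonneg_left (hz _) (hstep i)
    _ = f 0 * b := by rw [← sum_mul, sum_range_sub' f n]; ring

end AbelSummation

theorem norm_sum_range_pow_succ_le {K : Type*} [NormedDivisionRing K] {w : K} (hw : ‖w‖ = 1)
    (hw1 : w ≠ 1) (k : ℕ) : ‖∑ i ∈ range k, w ^ (i + 1)‖ ≤ 2 / ‖w - 1‖ := by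
  have hsum : ∑ i ∈ range k, w ^ (i + 1) = w * ((w ^ k - 1) / (w - 1)) := by
    simp only [pow_succ', ← mul_sum, geom_sum_eq hw1]
  rw [hsum, norm_mul, hw, one_mul, norm_div]
  gcongr
  calc ‖w ^ k - 1‖ ≤ ‖w ^ k‖ + ‖(1 : K)‖ := norm_sub_le _ _
    _ = 2 := by rw [norm_pow, hw, one_pow, norm_one]; norm_num

lemma ee_eq_exp (t : ℝ) : ee t = Complex.exp (Complex.I * (2 * π * t : ℝ)) := by
  rw [ee]; push_cast; ring_nf

lemma norm_ee (t : ℝ) : ‖ee t‖ = 1 := by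
  rw [ee_eq_exp, mul_comm, Complex.norm_exp_ofReal_mul_I]

lemma ee_nat_mul (m : ℕ) (α : ℝ) : ee (m * α) = ee α ^ m := by
  rw [ee, ee, ← Complex.exp_nat_mul]; push_cast; ring_nf

lemma four_mul_abs_le_norm_ee_sub_one {α : ℝ} (hα : |α| ≤ 1 / 2) : 4 * |α| ≤ ‖ee α - 1‖ := by
  have hπα : |π * α| ≤ π / 2 := by
    rw [abs_mul, abs_of_pos pi_pos]; nlinarith [pi_pos]
  calc 4 * |α| = 2 * (2 / π * |π * α|) := by
        rw [abs_mul, abs_of_pos pi_pos]; field_simp; ring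
    _ ≤ 2 * |sin (π * α)| := by gcongr; exact mul_abs_le_abs_sin hπα
    _ = ‖ee α - 1‖ := by
        rw [ee_eq_exp, Complex.norm_exp_I_mul_ofReal_sub_one, norm_mul, Real.norm_two,
          Real.norm_eq_abs]
        ring_nf

lemma monotoneOn_of_mul_log_eq {y : ℝ → ℝ}
    (hy : ∀ t : ℝ, 0 < t → 1 < y t ∧ y t * log (y t) = t) : MonotoneOn y (Set.Ioi 0) := by
  intro s hs t ht hst
  have hmem : ∀ u : ℝ, 0 < u → y u ∈ Set.Ici (exp (-1)) := fun u hu =>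
    le_of_lt (lt_trans (exp_lt_one_iff.2 (by norm_num)) (hy u hu).1)
  rw [← mul_log_strictMonoOn.le_iff_le (hmem s hs) (hmem t ht), (hy s hs).2, (hy t ht).2]
  exact hst

lemma antitone_inv_one_add_log {y : ℝ → ℝ}
    (hy : ∀ t : ℝ, 0 < t → 1 < y t ∧ y t * log (y t) = t) :
    Antitone fun i : ℕ => (1 + log (y (i + 1)))⁻¹ := by
  refine antitone_nat_of_succ_le fun i => inv_anti₀ ?_ ?_
  · linarith [log_pos (hy (i + 1) (by positivity)).1]
  · have hy_le : y (i + 1) ≤ y (i + 1 + 1) :=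
      monotoneOn_of_mul_log_eq hy (Set.mem_Ioi.2 (by positivity))
        (Set.mem_Ioi.2 (by positivity)) (by linarith)
    push_cast
    linarith [log_le_log (by linarith [(hy (i + 1) (by positivity)).1]) hy_le]

lemma Th_eq_sum_range (y : ℝ → ℝ) (N : ℕ) (α : ℝ) :
    Th y N α = ∑ i ∈ range N, (1 + log (y (i + 1)))⁻¹ • ee α ^ (i + 1) := by
  rw [Th, ← Finset.Ico_add_one_right_eq_Icc, sum_Ico_eq_sum_range, Nat.add_sub_cancel]
  refine sum_congr rfl fun i _ => ?_
  rw [Complex.real_smul, ← ee_nat_mul, div_eq_inv_mul, add_comm 1 i]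
  push_cast; rfl

lemma norm_Th_le {y : ℝ → ℝ} (hy : ∀ t : ℝ, 0 < t → 1 < y t ∧ y t * log (y t) = t) (N : ℕ)
    {α : ℝ} (hα0 : α ≠ 0) (hα : |α| ≤ 1 / 2) : ‖Th y N α‖ ≤ 1 / (2 * |α|) := by
  have hlog_pos : ∀ i : ℕ, 0 < log (y (i + 1)) := fun i => log_pos (hy _ (by positivity)).1
  have hα_pos : 0 < |α| := abs_pos.2 hα0
  have hee : 4 * |α| ≤ ‖ee α - 1‖ := four_mul_abs_le_norm_ee_sub_one hα
  have hee_ne : ee α ≠ 1 := fun h => by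
    rw [h, sub_self, norm_zero] at hee; linarith
  have hpartial : ∀ k, ‖∑ i ∈ range k, ee α ^ (i + 1)‖ ≤ 1 / (2 * |α|) := fun k =>
    (norm_sum_range_pow_succ_le (norm_ee α) hee_ne k).trans <| by
      rw [div_le_div_iff₀ (by linarith) (by linarith)]; linarith
  rw [Th_eq_sum_range]
  calc _ ≤ (1 + log (y ((0 : ℕ) + 1)))⁻¹ * (1 / (2 * |α|)) :=
        norm_sum_range_smul_le_of_antitone (antitone_inv_one_add_log hy)
          (fun i => by have := hlog_pos i; positivity) hpartial N
    _ ≤ 1 / (2 * |α|) :=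
        mul_le_of_le_one_left (by positivity) (inv_le_one_of_one_le₀ (by linarith [hlog_pos 0]))

lemma continuous_Th (y : ℝ → ℝ) (N : ℕ) : Continuous (Th y N) := by
  unfold Th ee; fun_prop

section CubeDecay

variable {E : Type*} [NormedAddCommGroup E] [NormedSpace ℝ E]

lemma norm_intervalIntegral_le_of_norm_le_div_cube {f : ℝ → E} {τ a K : ℝ} (hτ : 0 < τ)
    (hτa : τ ≤ a) (hf : ∀ t ∈ Set.Icc τ a, ‖f t‖ ≤ K / t ^ 3) :
    ‖∫ t in τ..a, f t‖ ≤ K / (2 * τ ^ 2) := by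
  have hK : 0 ≤ K := by
    simpa using (le_div_iff₀ (pow_pos hτ 3)).1 ((norm_nonneg _).trans (hf τ ⟨le_rfl, hτa⟩))
  have h0 : (0 : ℝ) ∉ Set.uIcc τ a := by
    rw [Set.uIcc_of_le hτa]; exact fun h => absurd h.1 (not_le.2 hτ)
  have hcube : ∀ t : ℝ, K / t ^ 3 = K * t ^ (-3 : ℤ) := fun t => by
    rw [zpow_neg, div_eq_mul_inv]; norm_cast
  calc ‖∫ t in τ..a, f t‖ ≤ ∫ t in τ..a, K / t ^ 3 := by
        refine intervalIntegral.norm_integral_le_of_norm_le hτa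
          (MeasureTheory.ae_of_all _ fun t ht => hf t (Set.Ioc_subset_Icc_self ht)) ?_
        simp_rw [hcube]
        exact (intervalIntegral.intervalIntegrable_zpow (Or.inr h0)).const_mul K
    _ = K / (2 * τ ^ 2) - K / (2 * a ^ 2) := by
        simp_rw [hcube]
        rw [intervalIntegral.integral_const_mul, integral_zpow (Or.inr ⟨by norm_num, h0⟩)]
        have ha : 0 < a := hτ.trans_le hτa
        rw [show ((-3 : ℤ) + 1) = -2 by norm_num, zpow_neg, zpow_neg]
        push_cast
        field_simp
        ring
    _ ≤ K / (2 * τ ^ 2) := sub_le_self _ (by positivity)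

lemma norm_integral_sub_integral_le_of_norm_le_div_cube {f : ℝ → E} (hf : Continuous f)
    {τ a K : ℝ} (hτ : 0 < τ) (hτa : τ ≤ a)
    (hbound : ∀ t, τ ≤ |t| → |t| ≤ a → ‖f t‖ ≤ K / |t| ^ 3) :
    ‖(∫ t in -a..a, f t) - ∫ t in -τ..τ, f t‖ ≤ K / τ ^ 2 := by
  have hint : ∀ b c : ℝ, IntervalIntegrable f MeasureTheory.volume b c :=
    fun b c => hf.intervalIntegrable b c
  have hsplit : (∫ t in -a..a, f t) - ∫ t in -τ..τ, f t =
      (∫ t in τ..a, f (-t)) + ∫ t in τ..a, f t := by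
    rw [← intervalIntegral.integral_add_adjacent_intervals (hint (-a) (-τ)) (hint (-τ) a),
      ← intervalIntegral.integral_add_adjacent_intervals (hint (-τ) τ) (hint τ a),
      intervalIntegral.integral_comp_neg fun t => f t]
    abel
  have hpos : ‖∫ t in τ..a, f t‖ ≤ K / (2 * τ ^ 2) :=
    norm_intervalIntegral_le_of_norm_le_div_cube hτ hτa fun t ht => by
      have ht0 : |t| = t := abs_of_pos (hτ.trans_le ht.1)
      simpa only [ht0] using hbound t (by rw [ht0]; exact ht.1) (by rw [ht0]; exact ht.2)
  have hneg : ‖∫ t in τ..a, f (-t)‖ ≤ K / (2 * τ ^ 2) :=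
    norm_intervalIntegral_le_of_norm_le_div_cube hτ hτa fun t ht => by
      have ht0 : |-t| = t := by rw [abs_neg, abs_of_pos (hτ.trans_le ht.1)]
      simpa only [ht0] using hbound (-t) (by rw [ht0]; exact ht.1) (by rw [ht0]; exact ht.2)
  calc _ ≤ K / (2 * τ ^ 2) + K / (2 * τ ^ 2) := hsplit ▸ norm_add_le_of_le hneg hpos
    _ = K / τ ^ 2 := by ring

end CubeDecay

lemma four_le_of_mul_log_eq {X : ℝ} {N : ℕ} (hX : 1 < X) (hXN : X * log X = N) (hN : 12 ≤ N) :
    4 ≤ X := by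
  by_contra! hX4
  have hlog : log X ≤ X - 1 := log_le_sub_one_of_pos (by linarith)
  have hN' : (12 : ℝ) ≤ N := by exact_mod_cast hN
  nlinarith [log_nonneg hX.le]

theorem Psi3_minus_Psi_tilde :
    ∃ C : ℝ, 0 < C ∧ ∃ N₀ : ℕ, ∀ N : ℕ, N₀ ≤ N →
      ∀ X : ℝ, 1 < X → X * Real.log X = N →
      ∀ y : ℝ → ℝ, (∀ t : ℝ, 0 < t → 1 < y t ∧ y t * Real.log (y t) = t) →
        ‖(∫ α in (-(1 : ℝ)/2)..(1/2), (Th y N α) ^ 3 * ee (-(N * α))) -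
          ∫ α in (-(X ^ ((-23 : ℝ)/25)))..(X ^ ((-23 : ℝ)/25)),
            (Th y N α) ^ 3 * ee (-(N * α))‖ ≤ C * X ^ ((46 : ℝ)/25) := by
  refine ⟨1 / 8, by norm_num, 12, fun N hN X hX hXN y hy => ?_⟩
  have hX4 : 4 ≤ X := four_le_of_mul_log_eq hX hXN hN
  set τ := X ^ ((-23 : ℝ) / 25) with hτ_def
  have hτ0 : 0 < τ := rpow_pos_of_pos (by linarith) _
  have hτ_sq : (τ ^ 2)⁻¹ = X ^ ((46 : ℝ) / 25) := by
    rw [hτ_def, ← rpow_natCast, ← rpow_mul (by linarith), ← rpow_neg (by linarith)]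
    norm_num
  have hτ_le : τ ≤ 1 / 2 := by
    have h4 : 4 ≤ (τ ^ 2)⁻¹ := hτ_sq ▸ hX4.trans (self_le_rpow_of_one_le (by linarith) (by norm_num))
    nlinarith [(le_inv_comm₀ (by norm_num) (by positivity)).1 h4]
  have hcont : Continuous fun α => Th y N α ^ 3 * ee (-(N * α)) := by
    have := continuous_Th y N
    unfold ee; fun_prop
  have hbound : ∀ t, τ ≤ |t| → |t| ≤ 1 / 2 → ‖Th y N t ^ 3 * ee (-(N * t))‖ ≤ 1 / 8 / |t| ^ 3 :=
    fun t ht hth => by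
      rw [norm_mul, norm_pow, norm_ee, mul_one]
      calc ‖Th y N t‖ ^ 3 ≤ (1 / (2 * |t|)) ^ 3 := by
            gcongr; exact norm_Th_le hy N (abs_pos.1 (hτ0.trans_le ht)) hth
        _ = 1 / 8 / |t| ^ 3 := by ring
  rw [neg_div]
  calc _ ≤ 1 / 8 / τ ^ 2 :=
        norm_integral_sub_integral_le_of_norm_le_div_cube hcont hτ0 hτ_le hbound
    _ = 1 / 8 * X ^ ((46 : ℝ) / 25) := by rw [← hτ_sq]; ring
end
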